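/- If φ(ū) and ψ(v̄) are mutually algebraic relations on a structure M (i.e., there is a constant K such that each element of M occurs in at most K tuples satisfying the relation) and the variable tuples ū and v̄ share at least one common variable, then the conjunction φ(ū) ∧ ψ(v̄) is also a mutually algebraic relation. -/
import Mathlib


/-- A relation `R ⊆ M^ι` is mutually algebraic with constant `K` if every element of `M`
occurs as a coordinate of at most `K` tuples of `R`. -/
def MutAlg {M ι : Type*} (R : Set (ι → M)) (K : ℕ) : Prop :=
  ∀ m : M, {b | b ∈ R ∧ ∃ i, b i = m}.Finite ∧ {b | b ∈ R ∧ ∃ i, b i = m}.ncard ≤ K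

lemma biUnion_ncard_le {α β : Type*} {S : Set α} (hS : S.Finite) {A : α → Set β}
    (hA : ∀ a, (A a).Finite) {n k : ℕ} (hn : S.ncard ≤ n) (hk : ∀ a, (A a).ncard ≤ k) :
    (⋃ a ∈ S, A a).Finite ∧ (⋃ a ∈ S, A a).ncard ≤ n * k := by
  classical
  have hfin : (⋃ a ∈ S, A a).Finite := hS.biUnion fun a _ => hA a
  refine ⟨hfin, ?_⟩
  have hset : (⋃ a ∈ S, A a) = ↑(hS.toFinset.biUnion fun a => (hA a).toFinset) := by
    ext x
    simp [Set.Finite.mem_toFinset]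
  rw [hset, Set.ncard_coe_finset]
  calc (hS.toFinset.biUnion fun a => (hA a).toFinset).card ≤ hS.toFinset.card * k := by
        apply Finset.card_biUnion_le_card_mul
        intro a _
        rw [← Set.ncard_eq_toFinset_card (A a) (hA a)]
        exact hk a
    _ ≤ n * k := by
        apply Nat.mul_le_mul_right
        rw [← Set.ncard_eq_toFinset_card S hS]
        exact hn

lemma prod_ncard_le {α β : Type*} {A : Set α} {B : Set β} (hA : A.Finite) (hB : B.Finite) :
    (A ×ˢ B).ncard ≤ A.ncard * B.ncard := by
  have h1 : A ×ˢ B = ↑(hA.toFinset ×ˢ hB.toFinset) := by ext; simp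
  rw [h1, Set.ncard_coe_finset, Finset.card_product, Set.ncard_eq_toFinset_card A hA,
    Set.ncard_eq_toFinset_card B hB]

/-- If `φ(ū)` and `ψ(v̄)` are mutually algebraic relations and the variable tuples `ū`, `v̄`
share a common variable, then the conjunction `φ(ū) ∧ ψ(v̄)` (a relation on the combined
variable tuple `ū ∪ v̄`) is also mutually algebraic. -/
theorem stmt_0 {M V : Type*} [DecidableEq V] (s t : Finset V) (hst : (s ∩ t).Nonempty)
    (φ : Set ((v : s) → M)) (ψ : Set ((v : t) → M))
    (K₁ K₂ : ℕ) (hφ : MutAlg φ K₁) (hψ : MutAlg ψ K₂) :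
    ∃ K : ℕ, MutAlg {f : (v : (s ∪ t : Finset V)) → M |
      (fun v : s => f ⟨v, Finset.mem_union_left t v.2⟩) ∈ φ ∧
      (fun v : t => f ⟨v, Finset.mem_union_right s v.2⟩) ∈ ψ} K := by
  classical
  obtain ⟨v₀, hv₀⟩ := hst
  have hv₀s : v₀ ∈ s := (Finset.mem_inter.1 hv₀).1
  have hv₀t : v₀ ∈ t := (Finset.mem_inter.1 hv₀).2
  set A : M → Set ((v : s) → M) := fun m => {b | b ∈ φ ∧ ∃ i, b i = m} with hA
  set B : M → Set ((v : t) → M) := fun m => {b | b ∈ ψ ∧ ∃ i, b i = m} with hB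
  refine ⟨(K₁ + K₂ * K₁) * (K₂ + K₁ * K₂), fun m => ?_⟩
  set Φ : ((v : (s ∪ t : Finset V)) → M) → ((v : s) → M) × ((v : t) → M) :=
    fun f => (fun v : s => f ⟨v, Finset.mem_union_left t v.2⟩,
      fun v : t => f ⟨v, Finset.mem_union_right s v.2⟩) with hΦ
  have hΦinj : Function.Injective Φ := by
    intro f g h
    funext v
    rcases Finset.mem_union.1 v.2 with h1 | h2
    · have := congrFun (congrArg Prod.fst h) ⟨v.1, h1⟩
      simpa [hΦ] using this
    · have := congrFun (congrArg Prod.snd h) ⟨v.1, h2⟩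
      simpa [hΦ] using this
  set A' : Set ((v : s) → M) := A m ∪ ⋃ b ∈ B m, A (b ⟨v₀, hv₀t⟩) with hA'
  set B' : Set ((v : t) → M) := B m ∪ ⋃ a ∈ A m, B (a ⟨v₀, hv₀s⟩) with hB'
  obtain ⟨hU1fin, hU1card⟩ := biUnion_ncard_le (hψ m).1 (fun b => (hφ (b ⟨v₀, hv₀t⟩)).1)
    (hψ m).2 (fun b => (hφ (b ⟨v₀, hv₀t⟩)).2)
  obtain ⟨hU2fin, hU2card⟩ := biUnion_ncard_le (hφ m).1 (fun a => (hψ (a ⟨v₀, hv₀s⟩)).1)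
    (hφ m).2 (fun a => (hψ (a ⟨v₀, hv₀s⟩)).2)
  have hA'fin : A'.Finite := (hφ m).1.union hU1fin
  have hB'fin : B'.Finite := (hψ m).1.union hU2fin
  have hA'card : A'.ncard ≤ K₁ + K₂ * K₁ :=
    le_trans (Set.ncard_union_le _ _) (Nat.add_le_add (hφ m).2 hU1card)
  have hB'card : B'.ncard ≤ K₂ + K₁ * K₂ :=
    le_trans (Set.ncard_union_le _ _) (Nat.add_le_add (hψ m).2 hU2card)
  have hsub : {f : (v : (s ∪ t : Finset V)) → M |
      ((fun v : s => f ⟨v, Finset.mem_union_left t v.2⟩) ∈ φ ∧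
      (fun v : t => f ⟨v, Finset.mem_union_right s v.2⟩) ∈ ψ) ∧ ∃ i, f i = m}
      ⊆ Φ ⁻¹' (A' ×ˢ B') := by
    rintro f ⟨⟨hfφ, hfψ⟩, i, hi⟩
    have hab : (Φ f).1 ⟨v₀, hv₀s⟩ = (Φ f).2 ⟨v₀, hv₀t⟩ := by
      simp only [hΦ]
    rcases Finset.mem_union.1 i.2 with h1 | h2
    · have ha : (Φ f).1 ∈ A m := by
        refine ⟨hfφ, ⟨i.1, h1⟩, ?_⟩
        simp only [hΦ]
        rw [← hi]
      have hb : (Φ f).2 ∈ B ((Φ f).1 ⟨v₀, hv₀s⟩) := ⟨hfψ, ⟨v₀, hv₀t⟩, hab.symm⟩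
      exact ⟨Or.inl ha, Or.inr (Set.mem_biUnion ha hb)⟩
    · have hb : (Φ f).2 ∈ B m := by
        refine ⟨hfψ, ⟨i.1, h2⟩, ?_⟩
        simp only [hΦ]
        rw [← hi]
      have ha : (Φ f).1 ∈ A ((Φ f).2 ⟨v₀, hv₀t⟩) := ⟨hfφ, ⟨v₀, hv₀s⟩, hab⟩
      exact ⟨Or.inr (Set.mem_biUnion hb ha), Or.inl hb⟩
  have hPfin : (A' ×ˢ B').Finite := hA'fin.prod hB'fin
  have hprefin : (Φ ⁻¹' (A' ×ˢ B')).Finite := hPfin.preimage hΦinj.injOn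
  refine ⟨hprefin.subset hsub, ?_⟩
  calc _ ≤ (Φ ⁻¹' (A' ×ˢ B')).ncard := Set.ncard_le_ncard hsub hprefin
    _ = (Φ '' (Φ ⁻¹' (A' ×ˢ B'))).ncard := (Set.ncard_image_of_injective _ hΦinj).symm
    _ ≤ (A' ×ˢ B').ncard :=
        Set.ncard_le_ncard (Set.image_preimage_subset _ _) hPfin
    _ ≤ A'.ncard * B'.ncard := prod_ncard_le hA'fin hB'fin
    _ ≤ (K₁ + K₂ * K₁) * (K₂ + K₁ * K₂) := Nat.mul_le_mul hA'card hB'card
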